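/- arXiv:2107.05798 — 2 statements merged into one kernel-verified Lean document; each statement's English description precedes it below -/
import Mathlib

section
/- Main monotonic improvement bound, exponential branch (Theorem 4, Bretagnolle–Huber branch): Let π_K and π_{K+1} be policies of a finite MDP with π_K(s,a) > 0 for all s, a, and suppose there is C > 0 with max_{s∈S} D_KL(π_{K+1}(s,·) ‖ π_K(s,·)) ≤ 2C. Let A = A^{π_{K+1}}_{π_K, d^{π_K}}, assume A ≥ 0, set ζ = (1−γ)³·A / (8γ·(1 − exp(−2C))), assume ζ ≤ 1, and define π̃(s,a) = ζ·π_{K+1}(s,a) + (1−ζ)·π_K(s,a). Then J^{π̃} − J^{π_K} ≥ (1−γ)³·A² / (16γ·(1 − exp(−2C))). -/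
/-!
By the performance difference lemma, `J^{π̃} - J^{π_K} = ζ ∑ₛ d^{π̃}(s) A^{π_{K+1}}_{π_K}(s)`,
which differs from the gain `ζ A` by at most `ζ ‖d^{π̃} - d^{π_K}‖₁ · maxₛ |A^{π_{K+1}}_{π_K}(s)|`.
If `δ` bounds `∑ₐ |π_{K+1}(s,a) - π_K(s,a)|` at every state, the occupancy measure moves by at
most `γ ζ δ / (1 - γ)` and the advantage is at most `δ / (1 - γ)`, so the loss is at most
`γ δ² ζ² / (1 - γ)²`. The Bretagnolle–Huber inequality gives `δ² ≤ 4 (1 - e^{-2C})`, and for the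
given `ζ` the loss is then `(1 - γ)/2` times the gain, which leaves at least `ζ A / 2`.
-/

open Finset

/-- A finite Markov decision process with bounded rewards and discount `γ ∈ (0,1)`. -/
structure FiniteMDP (S A : Type) [Fintype S] [Fintype A] : Type where
  P : S → A → S → ℝ
  r : S → A → ℝ
  γ : ℝ
  s0 : S
  P_nonneg : ∀ s a s', 0 ≤ P s a s'
  P_sum_one : ∀ s a, ∑ s', P s a s' = 1
  r_bound : ∀ s a, |r s a| ≤ 1
  γ_pos : 0 < γ
  γ_lt_one : γ < 1

variable {S A : Type} [Fintype S] [Fintype A] [DecidableEq S]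

/-- `π` is a (stochastic) policy. -/
def IsPolicy (π : S → A → ℝ) : Prop :=
  (∀ s a, 0 ≤ π s a) ∧ ∀ s, ∑ a, π s a = 1

/-- `Q` satisfies the Bellman equation of policy `π`. -/
def IsQ (M : FiniteMDP S A) (π Q : S → A → ℝ) : Prop :=
  ∀ s a, Q s a = M.r s a + M.γ * ∑ s', M.P s a s' * ∑ a', π s' a' * Q s' a'

/-- `d` is the discounted state (occupancy) distribution of policy `π`. -/
def IsD (M : FiniteMDP S A) (π : S → A → ℝ) (d : S → ℝ) : Prop :=
  ∀ s', d s' = (1 - M.γ) * (if s' = M.s0 then (1 : ℝ) else 0)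
      + M.γ * ∑ s, d s * ∑ a, π s a * M.P s a s'

/-- The normalized return `J^π = ∑_s d^π(s) ∑_a π(s,a) r(s,a)`. -/
def Jret (M : FiniteMDP S A) (π : S → A → ℝ) (d : S → ℝ) : ℝ :=
  ∑ s, d s * ∑ a, π s a * M.r s a

/-- The policy advantage function `A^{π'}_π(s) = ∑_a (π'(s,a) − π(s,a)) Q_π(s,a)`. -/
def polAdv (π' π Q : S → A → ℝ) (s : S) : ℝ :=
  ∑ a, (π' s a - π s a) * Q s a

/-- The expected policy advantage `A^{π'}_{π,d}`. -/
def expPolAdv (π' π Q : S → A → ℝ) (d : S → ℝ) : ℝ :=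
  ∑ s, d s * polAdv π' π Q s

/-- `δ(π',π) = max_s ∑_a |π'(s,a) − π(s,a)|`. -/
noncomputable def polDist (π' π : S → A → ℝ) : ℝ :=
  ⨆ s : S, ∑ a, |π' s a - π s a|

/-- `ΔA^{π'}_π = max_{s,s'} |A^{π'}_π(s) − A^{π'}_π(s')|`. -/
noncomputable def advRange (π' π Q : S → A → ℝ) : ℝ :=
  ⨆ p : S × S, |polAdv π' π Q p.1 - polAdv π' π Q p.2|

/-- Kullback–Leibler divergence between probability vectors on a finite set. -/
noncomputable def KLdiv {B : Type} [Fintype B] (p q : B → ℝ) : ℝ :=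
  ∑ a ∈ Finset.univ.filter (fun a => 0 < p a), p a * Real.log (p a / q a)

section BretagnolleHuber

open Real

variable {B : Type} [Fintype B] {p q : B → ℝ}

theorem sum_abs_sub_eq_two_sub_two_mul_sum_min (hp : ∑ a, p a = 1) (hq : ∑ a, q a = 1) :
    ∑ a, |p a - q a| = 2 - 2 * ∑ a, min (p a) (q a) := by
  have h (x y : ℝ) : |x - y| = x + y - 2 * min x y := by
    rcases le_total x y with hxy | hxy
    · rw [abs_of_nonpos (sub_nonpos.2 hxy), min_eq_left hxy]; ring
    · rw [abs_of_nonneg (sub_nonneg.2 hxy), min_eq_right hxy]; ring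
  simp only [h, sum_sub_distrib, sum_add_distrib, ← mul_sum, hp, hq]
  ring

theorem sq_sum_sqrt_mul_le_sum_min_mul_two_sub (hp0 : ∀ a, 0 ≤ p a) (hq0 : ∀ a, 0 ≤ q a)
    (hp : ∑ a, p a = 1) (hq : ∑ a, q a = 1) :
    (∑ a, √(p a * q a)) ^ 2 ≤ (∑ a, min (p a) (q a)) * (2 - ∑ a, min (p a) (q a)) := by
  have hmax : ∑ a, max (p a) (q a) = 2 - ∑ a, min (p a) (q a) := by
    rw [eq_sub_iff_add_eq, ← sum_add_distrib]
    simp only [max_add_min, sum_add_distrib, hp, hq]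
    norm_num
  rw [← hmax]
  exact sum_sq_le_sum_mul_sum_of_sq_le_mul _ (fun a _ => le_min (hp0 a) (hq0 a))
    (fun a _ => (hp0 a).trans (le_max_left _ _))
    (fun a _ => by rw [sq_sqrt (mul_nonneg (hp0 a) (hq0 a)), min_mul_max])

theorem exp_neg_KLdiv_le_sq_sum_sqrt_mul (hp0 : ∀ a, 0 ≤ p a) (hp : ∑ a, p a = 1)
    (hq0 : ∀ a, 0 < q a) : exp (-KLdiv p q) ≤ (∑ a, √(p a * q a)) ^ 2 := by
  set T := univ.filter fun a => 0 < p a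
  have hT : ∀ a ∈ T, 0 < p a := fun a ha => (mem_filter.1 ha).2
  have hpT : ∑ a ∈ T, p a = 1 :=
    (sum_filter_of_ne fun a _ ha => (hp0 a).lt_of_ne' ha).trans hp
  have hamgm := geom_mean_le_arith_mean_weighted T p (fun a => √(q a / p a))
    (fun a ha => (hT a ha).le) hpT (fun a _ => sqrt_nonneg _)
  have hgeom : ∏ a ∈ T, √(q a / p a) ^ p a = exp (-KLdiv p q / 2) := by
    rw [KLdiv, ← sum_neg_distrib, sum_div, exp_sum]
    refine prod_congr rfl fun a ha => ?_
    rw [rpow_def_of_pos (sqrt_pos.2 (div_pos (hq0 a) (hT a ha))),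
      log_sqrt (div_pos (hq0 a) (hT a ha)).le, log_div (hq0 a).ne' (hT a ha).ne',
      log_div (hT a ha).ne' (hq0 a).ne']
    ring_nf
  have harith : ∑ a ∈ T, p a * √(q a / p a) = ∑ a ∈ T, √(p a * q a) := by
    refine sum_congr rfl fun a ha => ?_
    rw [← sqrt_sq (hT a ha).le, ← sqrt_mul (sq_nonneg _), sqrt_sq (hT a ha).le]
    congr 1
    field_simp [(hT a ha).ne']
  calc exp (-KLdiv p q) = exp (-KLdiv p q / 2) ^ 2 := by rw [← exp_nat_mul]; ring_nf
    _ ≤ (∑ a ∈ T, √(p a * q a)) ^ 2 := by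
      gcongr
      rw [← hgeom, ← harith]
      exact hamgm
    _ ≤ (∑ a, √(p a * q a)) ^ 2 := by
      gcongr
      exact subset_univ T

theorem bretagnolle_huber (hp0 : ∀ a, 0 ≤ p a) (hp : ∑ a, p a = 1) (hq0 : ∀ a, 0 < q a)
    (hq : ∑ a, q a = 1) : (∑ a, |p a - q a|) ^ 2 ≤ 4 * (1 - exp (-KLdiv p q)) := by
  have hbc := sq_sum_sqrt_mul_le_sum_min_mul_two_sub hp0 (fun a => (hq0 a).le) hp hq
  have hkl := exp_neg_KLdiv_le_sq_sum_sqrt_mul hp0 hp hq0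
  rw [sum_abs_sub_eq_two_sub_two_mul_sum_min hp hq]
  nlinarith

theorem sum_abs_sub_le_of_KLdiv_le (hp0 : ∀ a, 0 ≤ p a) (hp : ∑ a, p a = 1)
    (hq0 : ∀ a, 0 < q a) (hq : ∑ a, q a = 1) {c : ℝ} (hc : KLdiv p q ≤ c) :
    ∑ a, |p a - q a| ≤ 2 * √(1 - exp (-c)) := by
  calc ∑ a, |p a - q a| = √((∑ a, |p a - q a|) ^ 2) :=
        (sqrt_sq (sum_nonneg fun a _ => abs_nonneg _)).symm
    _ ≤ √(2 ^ 2 * (1 - exp (-c))) := by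
      gcongr
      refine (bretagnolle_huber hp0 hp hq0 hq).trans ?_
      rw [show (2 : ℝ) ^ 2 = 4 by norm_num]
      gcongr
    _ = 2 * √(1 - exp (-c)) := by rw [sqrt_mul (sq_nonneg 2), sqrt_sq zero_le_two]

end BretagnolleHuber

section WeightedSums

variable {ι κ : Type*} [Fintype ι] [Fintype κ]

theorem abs_sum_mul_le_sum_abs_mul {f : ι → ℝ} {C : ℝ} (hf : ∀ i, |f i| ≤ C) (u : ι → ℝ) :
    |∑ i, u i * f i| ≤ (∑ i, |u i|) * C :=
  calc |∑ i, u i * f i| ≤ ∑ i, |u i| * |f i| := by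
        simpa only [abs_mul] using abs_sum_le_sum_abs (fun i => u i * f i) univ
    _ ≤ ∑ i, |u i| * C := by gcongr with i; exact hf i
    _ = (∑ i, |u i|) * C := (sum_mul _ _ _).symm

theorem abs_sum_mul_le_of_abs_le {w f : ι → ℝ} {C : ℝ} (hw0 : ∀ i, 0 ≤ w i)
    (hw : ∑ i, w i = 1) (hf : ∀ i, |f i| ≤ C) : |∑ i, w i * f i| ≤ C := by
  simpa only [abs_of_nonneg (hw0 _), hw, one_mul] using abs_sum_mul_le_sum_abs_mul hf w

variable {μ : ι → κ → ℝ}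

theorem sum_sum_mul_eq_sum_of_sum_eq_one (hμ : ∀ i, ∑ j, μ i j = 1) (v : ι → ℝ) :
    ∑ j, ∑ i, v i * μ i j = ∑ i, v i := by
  rw [sum_comm]
  simp only [← mul_sum, hμ, mul_one]

theorem sum_abs_sum_mul_le (hμ0 : ∀ i j, 0 ≤ μ i j) (hμ : ∀ i, ∑ j, μ i j = 1) (v : ι → ℝ) :
    ∑ j, |∑ i, v i * μ i j| ≤ ∑ i, |v i| :=
  calc ∑ j, |∑ i, v i * μ i j| ≤ ∑ j, ∑ i, |v i| * μ i j := by
        gcongr with j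
        simpa only [abs_mul, abs_of_nonneg (hμ0 _ j)] using
          abs_sum_le_sum_abs (fun i => v i * μ i j) univ
    _ = ∑ i, |v i| := sum_sum_mul_eq_sum_of_sum_eq_one hμ _

theorem sum_abs_sum_mul_le_of_sum_abs_le {w : ι → ℝ} {ε : ℝ} (hw0 : ∀ i, 0 ≤ w i)
    (hw : ∑ i, w i = 1) (hμ : ∀ i, ∑ j, |μ i j| ≤ ε) : ∑ j, |∑ i, w i * μ i j| ≤ ε :=
  calc ∑ j, |∑ i, w i * μ i j| ≤ ∑ j, ∑ i, w i * |μ i j| := by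
        gcongr with j
        simpa only [abs_mul, abs_of_nonneg (hw0 _)] using
          abs_sum_le_sum_abs (fun i => w i * μ i j) univ
    _ = ∑ i, w i * ∑ j, |μ i j| := by rw [sum_comm]; simp only [mul_sum]
    _ ≤ ∑ i, w i * ε := by gcongr with i; exacts [hw0 i, hμ i]
    _ = ε := by rw [← sum_mul, hw, one_mul]

end WeightedSums

section StateKernel

variable {S A : Type} [Fintype S] [Fintype A]

def FiniteMDP.stateKernel (M : FiniteMDP S A) (π : S → A → ℝ) (s s' : S) : ℝ :=
  ∑ a, π s a * M.P s a s'

variable {M : FiniteMDP S A}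

theorem FiniteMDP.stateKernel_nonneg {π : S → A → ℝ} (hπ : IsPolicy π) (s s' : S) :
    0 ≤ M.stateKernel π s s' :=
  sum_nonneg fun a _ => mul_nonneg (hπ.1 s a) (M.P_nonneg s a s')

theorem FiniteMDP.sum_stateKernel {π : S → A → ℝ} (hπ : IsPolicy π) (s : S) :
    ∑ s', M.stateKernel π s s' = 1 :=
  (sum_sum_mul_eq_sum_of_sum_eq_one (M.P_sum_one s) (π s)).trans (hπ.2 s)

theorem FiniteMDP.sum_abs_stateKernel_sub_le (π₁ π₂ : S → A → ℝ) (s : S) :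
    ∑ s', |M.stateKernel π₁ s s' - M.stateKernel π₂ s s'| ≤ ∑ a, |π₁ s a - π₂ s a| := by
  simp only [stateKernel, ← sum_sub_distrib, ← sub_mul]
  exact sum_abs_sum_mul_le (M.P_nonneg s) (M.P_sum_one s) _

theorem IsQ.abs_le [Nonempty A] {π Q : S → A → ℝ} (hπ : IsPolicy π) (hQ : IsQ M π Q)
    (s : S) (a : A) : |Q s a| ≤ (1 - M.γ)⁻¹ := by
  have : Nonempty S := ⟨M.s0⟩
  obtain ⟨⟨s₀, a₀⟩, hmax⟩ := Finite.exists_max fun x : S × A => |Q x.1 x.2|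
  replace hmax : ∀ s a, |Q s a| ≤ |Q s₀ a₀| := fun s a => hmax (s, a)
  have hnext := abs_sum_mul_le_of_abs_le (M.P_nonneg s₀ a₀) (M.P_sum_one s₀ a₀) fun s' =>
    abs_sum_mul_le_of_abs_le (hπ.1 s') (hπ.2 s') (hmax s')
  have hbellman : |Q s₀ a₀| ≤ 1 + M.γ * |Q s₀ a₀| :=
    calc |Q s₀ a₀| ≤ |M.r s₀ a₀| + |M.γ * _| := (congrArg abs (hQ s₀ a₀)).trans_le (abs_add_le _ _)
      _ ≤ 1 + M.γ * |Q s₀ a₀| := by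
        rw [abs_mul, abs_of_pos M.γ_pos]
        gcongr
        exacts [M.r_bound s₀ a₀, M.γ_pos.le]
  refine (hmax s a).trans ?_
  rw [← one_div, le_div_iff₀ (sub_pos.2 M.γ_lt_one)]
  linarith

end StateKernel

section Mixture

variable {S A : Type} [Fintype A] {π' π πt : S → A → ℝ} {ζ : ℝ}

theorem IsPolicy.mix (hπ' : IsPolicy π') (hπ : IsPolicy π) (hζ0 : 0 ≤ ζ) (hζ1 : ζ ≤ 1)
    (hmix : ∀ s a, πt s a = ζ * π' s a + (1 - ζ) * π s a) : IsPolicy πt := by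
  refine ⟨fun s a => ?_, fun s => ?_⟩
  · have := hπ'.1 s a
    have := hπ.1 s a
    have : 0 ≤ 1 - ζ := sub_nonneg.2 hζ1
    rw [hmix]
    positivity
  · simp only [hmix, sum_add_distrib, ← mul_sum, hπ'.2 s, hπ.2 s]
    ring

theorem polAdv_of_mix (hmix : ∀ s a, πt s a = ζ * π' s a + (1 - ζ) * π s a)
    (Q : S → A → ℝ) (s : S) : polAdv πt π Q s = ζ * polAdv π' π Q s := by
  simp only [polAdv, hmix, mul_sum]
  exact sum_congr rfl fun a _ => by ring

theorem sum_abs_sub_of_mix (hζ0 : 0 ≤ ζ) (hmix : ∀ s a, πt s a = ζ * π' s a + (1 - ζ) * π s a)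
    (s : S) : ∑ a, |πt s a - π s a| = ζ * ∑ a, |π' s a - π s a| := by
  simp only [hmix, mul_sum]
  refine sum_congr rfl fun a _ => ?_
  rw [show ζ * π' s a + (1 - ζ) * π s a - π s a = ζ * (π' s a - π s a) by ring, abs_mul,
    abs_of_nonneg hζ0]

end Mixture

section Occupancy

variable {S A : Type} [Fintype S] [Fintype A] [DecidableEq S] {M : FiniteMDP S A}
  {π : S → A → ℝ} {d : S → ℝ}

theorem IsD.eq_stateKernel (hd : IsD M π d) (s' : S) :
    d s' = (1 - M.γ) * (if s' = M.s0 then 1 else 0) + M.γ * ∑ s, d s * M.stateKernel π s s' :=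
  hd s'

theorem IsD.sum_eq_one (hπ : IsPolicy π) (hd : IsD M π d) : ∑ s, d s = 1 := by
  have h : ∑ s, d s = (1 - M.γ) + M.γ * ∑ s, d s := by
    conv_lhs => rw [sum_congr rfl fun s' _ => hd.eq_stateKernel s']
    rw [sum_add_distrib, ← mul_sum, ← mul_sum, sum_ite_eq', if_pos (mem_univ _), mul_one,
      sum_sum_mul_eq_sum_of_sum_eq_one (M.sum_stateKernel hπ)]
  have hγ : 1 - M.γ ≠ 0 := (sub_pos.2 M.γ_lt_one).ne'
  exact mul_left_cancel₀ hγ (by linarith)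

theorem IsD.sum_abs_le_one (hπ : IsPolicy π) (hd : IsD M π d) : ∑ s, |d s| ≤ 1 := by
  have h : ∑ s, |d s| ≤ (1 - M.γ) + M.γ * ∑ s, |d s| :=
    calc ∑ s', |d s'| ≤ ∑ s', ((1 - M.γ) * (if s' = M.s0 then 1 else 0)
          + M.γ * |∑ s, d s * M.stateKernel π s s'|) := by
          gcongr with s'
          rw [hd.eq_stateKernel s']
          refine (abs_add_le _ _).trans_eq ?_
          rw [abs_mul, abs_mul, abs_of_pos M.γ_pos, abs_of_pos (sub_pos.2 M.γ_lt_one)]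
          split_ifs <;> simp
      _ ≤ (1 - M.γ) + M.γ * ∑ s, |d s| := by
        rw [sum_add_distrib, ← mul_sum, ← mul_sum, sum_ite_eq', if_pos (mem_univ _), mul_one]
        exact add_le_add_right (mul_le_mul_of_nonneg_left
          (sum_abs_sum_mul_le (M.stateKernel_nonneg hπ) (M.sum_stateKernel hπ) d) M.γ_pos.le) _
  nlinarith [M.γ_lt_one]

-- `∑ |d| ≤ 1 = ∑ d` leaves no room for a negative entry.
theorem IsD.nonneg (hπ : IsPolicy π) (hd : IsD M π d) (s : S) : 0 ≤ d s := by
  have hgap : ∀ s ∈ univ, 0 ≤ |d s| - d s := fun s _ => sub_nonneg.2 (le_abs_self _)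
  have hsum : ∑ s, (|d s| - d s) = 0 := by
    refine le_antisymm ?_ (sum_nonneg hgap)
    rw [sum_sub_distrib, hd.sum_eq_one hπ]
    linarith [hd.sum_abs_le_one hπ]
  have := (sum_eq_zero_iff_of_nonneg hgap).1 hsum s (mem_univ s)
  exact abs_eq_self.1 (by linarith)

-- `d₁ - d₂` solves the occupancy equation of `π₁` with source `γ d₂ (P_{π₁} - P_{π₂})`.
theorem IsD.sum_abs_sub_le {π₁ π₂ : S → A → ℝ} {d₁ d₂ : S → ℝ} {ε : ℝ}
    (hπ₁ : IsPolicy π₁) (hπ₂ : IsPolicy π₂) (hd₁ : IsD M π₁ d₁) (hd₂ : IsD M π₂ d₂)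
    (hε : ∀ s, ∑ a, |π₁ s a - π₂ s a| ≤ ε) :
    ∑ s, |d₁ s - d₂ s| ≤ M.γ / (1 - M.γ) * ε := by
  set L := ∑ s, |d₁ s - d₂ s|
  have hdiff : ∀ s', d₁ s' - d₂ s' = M.γ * (∑ s, (d₁ s - d₂ s) * M.stateKernel π₁ s s'
      + ∑ s, d₂ s * (M.stateKernel π₁ s s' - M.stateKernel π₂ s s')) := fun s' => by
    rw [hd₁.eq_stateKernel s', hd₂.eq_stateKernel s']
    simp only [sub_mul, mul_sub, sum_sub_distrib]
    ring
  have hL : L ≤ M.γ * (L + ε) :=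
    calc L = M.γ * ∑ s', |∑ s, (d₁ s - d₂ s) * M.stateKernel π₁ s s'
          + ∑ s, d₂ s * (M.stateKernel π₁ s s' - M.stateKernel π₂ s s')| := by
          rw [mul_sum]
          exact sum_congr rfl fun s' _ => by rw [hdiff s', abs_mul, abs_of_pos M.γ_pos]
      _ ≤ M.γ * (L + ε) := by
        gcongr
        · exact M.γ_pos.le
        refine (sum_le_sum fun s' _ => abs_add_le _ _).trans ?_
        rw [sum_add_distrib]
        exact add_le_add
          (sum_abs_sum_mul_le (M.stateKernel_nonneg hπ₁) (M.sum_stateKernel hπ₁) _)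
          (sum_abs_sum_mul_le_of_sum_abs_le (hd₂.nonneg hπ₂) (hd₂.sum_eq_one hπ₂) fun s =>
            (M.sum_abs_stateKernel_sub_le π₁ π₂ s).trans (hε s))
  rw [div_mul_eq_mul_div, le_div_iff₀ (sub_pos.2 M.γ_lt_one)]
  linarith

theorem IsD.sum_mul_eq (hd : IsD M π d) (f : S → ℝ) :
    ∑ s, d s * f s
      = (1 - M.γ) * f M.s0 + M.γ * ∑ s, d s * ∑ a, π s a * ∑ s', M.P s a s' * f s' := by
  have hswap : ∑ s', (∑ s, d s * ∑ a, π s a * M.P s a s') * f s'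
      = ∑ s, d s * ∑ a, π s a * ∑ s', M.P s a s' * f s' := by
    simp only [sum_mul, mul_sum, mul_assoc]
    rw [sum_comm]
    exact sum_congr rfl fun s _ => sum_comm
  rw [← hswap, mul_sum]
  conv_lhs => rw [sum_congr rfl fun s' _ => congrArg (· * f s') (hd s')]
  simp only [add_mul, sum_add_distrib, mul_assoc, ite_mul, one_mul, zero_mul, mul_ite, mul_zero,
    sum_ite_eq', mem_univ, if_true]

theorem IsD.Jret_eq {πb Q : S → A → ℝ} (hd : IsD M π d) (hQ : IsQ M πb Q) :
    Jret M π d = expPolAdv π πb Q d + (1 - M.γ) * ∑ a, πb M.s0 a * Q M.s0 a := by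
  set V : S → ℝ := fun s => ∑ a, πb s a * Q s a
  have hstat := hd.sum_mul_eq V
  have hr : ∀ s a, M.r s a = Q s a - M.γ * ∑ s', M.P s a s' * V s' := fun s a => by
    rw [hQ s a]
    ring
  have hJ : Jret M π d = ∑ s, d s * ∑ a, π s a * Q s a
      - M.γ * ∑ s, d s * ∑ a, π s a * ∑ s', M.P s a s' * V s' := by
    simp only [Jret, hr, mul_sub, sum_sub_distrib, mul_left_comm _ M.γ, ← mul_sum]
  have hA : expPolAdv π πb Q d = ∑ s, d s * ∑ a, π s a * Q s a - ∑ s, d s * V s := by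
    simp only [expPolAdv, polAdv, sub_mul, sum_sub_distrib, mul_sub]
    rfl
  linarith

theorem IsD.Jret_sub_Jret_eq_expPolAdv {π' Q : S → A → ℝ} {d' : S → ℝ} (hd' : IsD M π' d')
    (hd : IsD M π d) (hQ : IsQ M π Q) : Jret M π' d' - Jret M π d = expPolAdv π' π Q d' := by
  rw [hd'.Jret_eq hQ, hd.Jret_eq hQ]
  simp [expPolAdv, polAdv]

theorem Jret_mix_sub_Jret_ge [Nonempty A] {π' πt Q : S → A → ℝ} {dt : S → ℝ} {ζ δ : ℝ}
    (hπ' : IsPolicy π') (hπ : IsPolicy π) (hQ : IsQ M π Q) (hd : IsD M π d)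
    (hζ0 : 0 ≤ ζ) (hζ1 : ζ ≤ 1) (hmix : ∀ s a, πt s a = ζ * π' s a + (1 - ζ) * π s a)
    (hdt : IsD M πt dt) (hδ : ∀ s, ∑ a, |π' s a - π s a| ≤ δ) :
    ζ * expPolAdv π' π Q d - M.γ * δ ^ 2 / (1 - M.γ) ^ 2 * ζ ^ 2
      ≤ Jret M πt dt - Jret M π d := by
  have hγ : 0 < 1 - M.γ := sub_pos.2 M.γ_lt_one
  have hδ0 : 0 ≤ δ := (sum_nonneg fun a _ => abs_nonneg _).trans (hδ M.s0)
  set g := polAdv π' π Q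
  have hg : ∀ s, |g s| ≤ δ * (1 - M.γ)⁻¹ := fun s =>
    (abs_sum_mul_le_sum_abs_mul (hQ.abs_le hπ s) _).trans (by gcongr; exact hδ s)
  have hdist : ∑ s, |dt s - d s| ≤ M.γ / (1 - M.γ) * (ζ * δ) :=
    hdt.sum_abs_sub_le (hπ'.mix hπ hζ0 hζ1 hmix) hπ hd fun s =>
      (sum_abs_sub_of_mix hζ0 hmix s).trans_le (mul_le_mul_of_nonneg_left (hδ s) hζ0)
  have herr : |∑ s, (dt s - d s) * g s| ≤ M.γ / (1 - M.γ) * (ζ * δ) * (δ * (1 - M.γ)⁻¹) :=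
    (abs_sum_mul_le_sum_abs_mul hg _).trans (by gcongr)
  have hJ : Jret M πt dt - Jret M π d = ζ * (expPolAdv π' π Q d + ∑ s, (dt s - d s) * g s) := by
    rw [hdt.Jret_sub_Jret_eq_expPolAdv hd hQ, expPolAdv, expPolAdv, ← sum_add_distrib, mul_sum]
    exact sum_congr rfl fun s _ => by rw [polAdv_of_mix hmix]; ring
  have hloss : ζ * (M.γ / (1 - M.γ) * (ζ * δ) * (δ * (1 - M.γ)⁻¹))
      = M.γ * δ ^ 2 / (1 - M.γ) ^ 2 * ζ ^ 2 := by
    field_simp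
  rw [hJ, ← hloss]
  nlinarith [mul_le_mul_of_nonneg_left (neg_le_of_abs_le herr) hζ0]

end Occupancy

theorem cpp_monotonic_improvement_exponential_general
    {S A : Type} [Fintype S] [Fintype A] [DecidableEq S] [Nonempty A]
    (M : FiniteMDP S A) (πK1 πK Q : S → A → ℝ) (C ζ : ℝ) (πt : S → A → ℝ) (dt d : S → ℝ)
    (hπK1 : IsPolicy πK1) (hπK : IsPolicy πK) (hπKpos : ∀ s a, 0 < πK s a)
    (hQ : IsQ M πK Q) (hd : IsD M πK d)
    (hC : 0 < C)
    (hKL : (⨆ s : S, KLdiv (πK1 s) (πK s)) ≤ 2 * C)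
    (hAdv : 0 ≤ expPolAdv πK1 πK Q d)
    (hζdef : ζ = (1 - M.γ) ^ 3 * expPolAdv πK1 πK Q d
        / (8 * M.γ * (1 - Real.exp (-(2 * C)))))
    (hζ1 : ζ ≤ 1)
    (hmix : ∀ s a, πt s a = ζ * πK1 s a + (1 - ζ) * πK s a)
    (hdt : IsD M πt dt) :
    Jret M πt dt - Jret M πK d ≥
      (1 - M.γ) ^ 3 * (expPolAdv πK1 πK Q d) ^ 2
        / (16 * M.γ * (1 - Real.exp (-(2 * C)))) := by
  have hγ := M.γ_pos
  have hγ1 := M.γ_lt_one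
  set 𝔸 := expPolAdv πK1 πK Q d
  set E := 1 - Real.exp (-(2 * C))
  have hE : 0 < E := sub_pos.2 (Real.exp_lt_one_iff.2 (by linarith))
  have hζ0 : 0 ≤ ζ :=
    hζdef ▸ div_nonneg (mul_nonneg (pow_nonneg (sub_nonneg.2 hγ1.le) 3) hAdv) (by positivity)
  have hδ : ∀ s, ∑ a, |πK1 s a - πK s a| ≤ 2 * √E := fun s =>
    sum_abs_sub_le_of_KLdiv_le (hπK1.1 s) (hπK1.2 s) (hπKpos s) (hπK.2 s)
      ((le_ciSup (Finite.bddAbove_range _) s).trans hKL)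
  have hgain := Jret_mix_sub_Jret_ge hπK1 hπK hQ hd hζ0 hζ1 hmix hdt hδ
  have hloss : M.γ * (2 * √E) ^ 2 / (1 - M.γ) ^ 2 * ζ ^ 2 = ζ * (1 - M.γ) * 𝔸 / 2 := by
    rw [mul_pow, Real.sq_sqrt hE.le, hζdef]
    field_simp
    ring
  have hbound : (1 - M.γ) ^ 3 * 𝔸 ^ 2 / (16 * M.γ * E) = ζ * 𝔸 / 2 := by
    rw [hζdef]
    field_simp
    ring
  rw [ge_iff_le, hbound]
  nlinarith [mul_nonneg (mul_nonneg hζ0 hAdv) hγ.le]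

/-- **Main monotonic improvement bound, exponential branch** (Theorem 4,
Bretagnolle–Huber branch). -/
theorem cpp_monotonic_improvement_exponential
    {S A : Type} [Fintype S] [Fintype A] [DecidableEq S] [Nonempty S] [Nonempty A]
    (M : FiniteMDP S A) (πK1 πK Q : S → A → ℝ) (C ζ : ℝ) (πt : S → A → ℝ) (dt d : S → ℝ)
    (hπK1 : IsPolicy πK1) (hπK : IsPolicy πK) (hπKpos : ∀ s a, 0 < πK s a)
    (hQ : IsQ M πK Q) (hd : IsD M πK d)
    (hC : 0 < C)
    (hKL : (⨆ s : S, KLdiv (πK1 s) (πK s)) ≤ 2 * C)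
    (hAdv : 0 ≤ expPolAdv πK1 πK Q d)
    (hζdef : ζ = (1 - M.γ) ^ 3 * expPolAdv πK1 πK Q d
        / (8 * M.γ * (1 - Real.exp (-(2 * C)))))
    (hζ1 : ζ ≤ 1)
    (hmix : ∀ s a, πt s a = ζ * πK1 s a + (1 - ζ) * πK s a)
    (hdt : IsD M πt dt) :
    Jret M πt dt - Jret M πK d ≥
      (1 - M.γ) ^ 3 * (expPolAdv πK1 πK Q d) ^ 2
        / (16 * M.γ * (1 - Real.exp (-(2 * C)))) :=
  cpp_monotonic_improvement_exponential_general M πK1 πK Q C ζ πt dt d hπK1 hπK hπKpos hQ hd hC hKL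
    hAdv hζdef hζ1 hmix hdt
end

section
/- Bounded drift of the discounted state distribution under KL-constrained interpolation (Lemma on bounded stationary distributions): Let π_{K+1} and π_K be policies of a finite MDP with π_K(s,a) > 0 for all s, a, suppose max_{s∈S} D_KL(π_{K+1}(s,·) ‖ π_K(s,·)) ≤ 2C for some C ≥ 0, let ζ ∈ [0,1], and define π̃(s,a) = ζ·π_{K+1}(s,a) + (1−ζ)·π_K(s,a). Then ∑_{s∈S} |d^{π̃}(s) − d^{π_K}(s)| ≤ (2ζγ/(1−γ)²)·√C. -/
open Finset

variable {S A : Type} [Fintype S] [Fintype A] [DecidableEq S]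

/-!
Pinsker's inequality `‖p - q‖₁² ≤ 2 KL(p ‖ q)` turns the KL constraint into
`‖π_{K+1}(s) - π_K(s)‖₁ ≤ 2√C`, so the mixture `π̃` moves by at most `2ζ√C` in `ℓ¹` at every
state.
Subtracting the fixed-point equations of the two occupancies gives
`d̃ - d = γ (d̃ - d) P^π̃ + γ d (P^π̃ - P^{π_K})`; as `P^π̃` is stochastic and `‖d‖₁ ≤ 1`, this yields
`(1 - γ) ‖d̃ - d‖₁ ≤ 2ζγ√C`, which is the claim up to a further factor `1 - γ ≤ 1`.

Pinsker itself follows from the pointwise bound `3 (t - 1)² ≤ (2t + 4) klFun t` (the difference is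
convex with a critical point at `t = 1`) and Cauchy–Schwarz with the weights `(2p + 4q) / 3`,
which sum to `2`.
-/

open InformationTheory

open Real Set in
theorem three_mul_sq_sub_one_le_mul_klFun {t : ℝ} (ht : 0 ≤ t) :
    3 * (t - 1) ^ 2 ≤ (2 * t + 4) * klFun t := by
  set g : ℝ → ℝ := fun t => (2 * t + 4) * klFun t - 3 * (t - 1) ^ 2
  have hg' : ∀ x, 0 < x → HasDerivAt g ((4 * x + 4) * log x - 8 * (x - 1)) x := by
    intro x hx
    have := (((hasDerivAt_id x).const_mul 2).add_const 4).mul (hasDerivAt_klFun hx.ne')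
      |>.sub ((((hasDerivAt_id x).sub_const 1).pow 2).const_mul 3)
    refine this.congr_deriv ?_
    simp only [id, klFun_apply]
    ring
  have hg'' : ∀ x, 0 < x → HasDerivAt (fun x => (4 * x + 4) * log x - 8 * (x - 1))
      (4 * (log x - (1 - x⁻¹))) x := by
    intro x hx
    have := (((hasDerivAt_id x).const_mul 4).add_const 4).mul (hasDerivAt_log hx.ne')
      |>.sub (((hasDerivAt_id x).sub_const 1).const_mul 8)
    refine this.congr_deriv ?_
    simp only [id]
    field_simp
    ring
  have hconv : ConvexOn ℝ (Ici 0) g := by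
    refine convexOn_of_hasDerivWithinAt2_nonneg (f' := fun x => (4 * x + 4) * log x - 8 * (x - 1))
      (f'' := fun x => 4 * (log x - (1 - x⁻¹))) (convex_Ici 0) (by fun_prop [continuous_klFun])
      ?_ ?_ ?_ <;> rw [interior_Ici] <;> intro x hx
    · exact (hg' x hx).hasDerivWithinAt
    · exact (hg'' x hx).hasDerivWithinAt
    · exact mul_nonneg (by norm_num) (sub_nonneg.2 (one_sub_inv_le_log_of_pos hx))
  have hmin : IsMinOn g (Ici 0) 1 := by
    refine hconv.isMinOn_of_rightDeriv_eq_zero (by simp) ?_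
    rw [(hg' 1 one_pos).hasDerivWithinAt.derivWithin (uniqueDiffWithinAt_Ioi 1)]
    simp
  have : g 1 ≤ g t := hmin (mem_Ici.2 ht)
  simp only [g, klFun_one] at this
  linarith

theorem sq_sub_le_mul_klFun_div {p q : ℝ} (hp : 0 ≤ p) (hq : 0 < q) :
    (p - q) ^ 2 ≤ q * klFun (p / q) * ((2 * p + 4 * q) / 3) := by
  have hq' := hq.ne'
  calc (p - q) ^ 2 = q ^ 2 * (3 * (p / q - 1) ^ 2) / 3 := by field_simp
    _ ≤ q ^ 2 * ((2 * (p / q) + 4) * klFun (p / q)) / 3 := by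
        gcongr q ^ 2 * ?_ / 3
        exact three_mul_sq_sub_one_le_mul_klFun (div_nonneg hp hq.le)
    _ = q * klFun (p / q) * ((2 * p + 4 * q) / 3) := by field_simp

theorem KLdiv_eq_sum_mul_klFun {B : Type} [Fintype B] {p q : B → ℝ} (hp : ∀ a, 0 ≤ p a)
    (hq : ∀ a, 0 < q a) (hpq : ∑ a, p a = ∑ a, q a) :
    KLdiv p q = ∑ a, q a * klFun (p a / q a) := by
  have hterm : ∀ a, q a * klFun (p a / q a) = p a * Real.log (p a / q a) + (q a - p a) := by
    intro a
    rw [klFun_apply]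
    field_simp [(hq a).ne']
    ring
  have hsupp : KLdiv p q = ∑ a, p a * Real.log (p a / q a) := by
    refine Finset.sum_subset (Finset.filter_subset _ _) fun a _ ha => ?_
    simp only [Finset.mem_filter, Finset.mem_univ, true_and, not_lt] at ha
    simp [le_antisymm ha (hp a)]
  simp only [hsupp, hterm, Finset.sum_add_distrib, Finset.sum_sub_distrib, hpq, sub_self, add_zero]

theorem sq_sum_abs_sub_le_two_mul_KLdiv {B : Type} [Fintype B] {p q : B → ℝ}
    (hp : ∀ a, 0 ≤ p a) (hp1 : ∑ a, p a = 1) (hq : ∀ a, 0 < q a) (hq1 : ∑ a, q a = 1) :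
    (∑ a, |p a - q a|) ^ 2 ≤ 2 * KLdiv p q := by
  have hweights : ∑ a, (2 * p a + 4 * q a) / 3 = 2 := by
    simp only [← Finset.sum_div, Finset.sum_add_distrib, ← Finset.mul_sum, hp1, hq1]
    norm_num
  calc (∑ a, |p a - q a|) ^ 2
      ≤ (∑ a, q a * klFun (p a / q a)) * ∑ a, (2 * p a + 4 * q a) / 3 :=
        Finset.sum_sq_le_sum_mul_sum_of_sq_le_mul _
          (fun a _ => mul_nonneg (hq a).le (klFun_nonneg (div_nonneg (hp a) (hq a).le)))
          (fun a _ => by linarith [hp a, hq a])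
          (fun a _ => (sq_abs _).trans_le (sq_sub_le_mul_klFun_div (hp a) (hq a)))
    _ = 2 * KLdiv p q := by
        rw [hweights, KLdiv_eq_sum_mul_klFun hp hq (hp1.trans hq1.symm), mul_comm]

theorem sum_abs_sum_mul_le_s14 {ι κ : Type} [Fintype ι] [Fintype κ] (x : ι → ℝ) (K : ι → κ → ℝ) :
    ∑ j, |∑ i, x i * K i j| ≤ ∑ i, |x i| * ∑ j, |K i j| :=
  calc ∑ j, |∑ i, x i * K i j| ≤ ∑ j, ∑ i, |x i| * |K i j| :=
        Finset.sum_le_sum fun j _ => (Finset.abs_sum_le_sum_abs _ _).trans_eq (by simp [abs_mul])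
    _ = ∑ i, |x i| * ∑ j, |K i j| := by rw [Finset.sum_comm]; simp [Finset.mul_sum]

namespace FiniteMDP

variable {S A : Type} [Fintype S] [Fintype A] (M : FiniteMDP S A)

def transition (π : S → A → ℝ) (s s' : S) : ℝ :=
  ∑ a, π s a * M.P s a s'

theorem sum_abs_P (s : S) (a : A) : ∑ s', |M.P s a s'| = 1 := by
  simp [abs_of_nonneg (M.P_nonneg s a _), M.P_sum_one]

theorem sum_abs_transition {π : S → A → ℝ} (hπ : IsPolicy π) (s : S) :
    ∑ s', |M.transition π s s'| = 1 := by
  have hT : ∀ s', 0 ≤ M.transition π s s' := fun s' =>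
    Finset.sum_nonneg fun a _ => mul_nonneg (hπ.1 s a) (M.P_nonneg s a s')
  rw [Finset.sum_congr rfl fun s' _ => abs_of_nonneg (hT s')]
  unfold transition
  rw [Finset.sum_comm]
  simp [← Finset.mul_sum, M.P_sum_one, hπ.2 s]

theorem sum_abs_transition_sub_le (π' π : S → A → ℝ) (s : S) :
    ∑ s', |M.transition π' s s' - M.transition π s s'| ≤ ∑ a, |π' s a - π s a| := by
  simpa [transition, ← Finset.sum_sub_distrib, ← sub_mul, sum_abs_P] using
    sum_abs_sum_mul_le_s14 (fun a => π' s a - π s a) (M.P s)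

end FiniteMDP

namespace IsD

variable {S A : Type} [Fintype S] [Fintype A] [DecidableEq S] {M : FiniteMDP S A}

theorem eq_transition {π : S → A → ℝ} {d : S → ℝ} (hd : IsD M π d) (s' : S) :
    d s' = (1 - M.γ) * (if s' = M.s0 then (1 : ℝ) else 0)
      + M.γ * ∑ s, d s * M.transition π s s' :=
  hd s'

theorem sum_abs_le_one_s14 {π : S → A → ℝ} {d : S → ℝ} (hπ : IsPolicy π) (hd : IsD M π d) :
    ∑ s, |d s| ≤ 1 := by
  have hγ := M.γ_pos
  have hγ1 := M.γ_lt_one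
  have h : ∑ s', |d s'| ≤ (1 - M.γ) + M.γ * ∑ s, |d s| :=
    calc ∑ s', |d s'|
        ≤ ∑ s', ((1 - M.γ) * (if s' = M.s0 then (1 : ℝ) else 0)
          + M.γ * |∑ s, d s * M.transition π s s'|) := by
          refine Finset.sum_le_sum fun s' _ => ?_
          rw [hd.eq_transition s']
          refine (abs_add_le _ _).trans_eq ?_
          rw [abs_mul, abs_mul, abs_of_pos hγ, abs_of_pos (sub_pos.2 hγ1)]
          split_ifs <;> simp
      _ = (1 - M.γ) + M.γ * ∑ s', |∑ s, d s * M.transition π s s'| := by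
          simp [Finset.sum_add_distrib, Finset.mul_sum]
      _ ≤ (1 - M.γ) + M.γ * ∑ s, |d s| := by
          gcongr (1 - M.γ) + M.γ * ?_
          simpa [M.sum_abs_transition hπ] using sum_abs_sum_mul_le_s14 d (M.transition π)
  nlinarith

theorem one_sub_mul_sum_abs_sub_le {π' π : S → A → ℝ} {d' d : S → ℝ} {ε : ℝ}
    (hπ' : IsPolicy π') (hπ : IsPolicy π) (hd' : IsD M π' d') (hd : IsD M π d)
    (hε : ∀ s, ∑ a, |π' s a - π s a| ≤ ε) :
    (1 - M.γ) * ∑ s, |d' s - d s| ≤ M.γ * ε := by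
  have hγ := M.γ_pos
  have hε0 : 0 ≤ ε := (Finset.sum_nonneg fun a _ => abs_nonneg _).trans (hε M.s0)
  have hdiff : ∀ s', d' s' - d s' = M.γ * (∑ s, (d' s - d s) * M.transition π' s s'
      + ∑ s, d s * (M.transition π' s s' - M.transition π s s')) := by
    intro s'
    rw [hd'.eq_transition s', hd.eq_transition s']
    simp only [sub_mul, mul_sub, Finset.sum_sub_distrib]
    ring
  have hdrift : ∑ s', |∑ s, d s * (M.transition π' s s' - M.transition π s s')| ≤ ε :=
    calc _ ≤ ∑ s, |d s| * ∑ s', |M.transition π' s s' - M.transition π s s'| :=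
          sum_abs_sum_mul_le_s14 d _
      _ ≤ ∑ s, |d s| * ε := by
          gcongr with s
          exact (M.sum_abs_transition_sub_le π' π s).trans (hε s)
      _ ≤ ε := by
          rw [← Finset.sum_mul]
          exact mul_le_of_le_one_left hε0 (hd.sum_abs_le_one_s14 hπ)
  have h : ∑ s', |d' s' - d s'| ≤ M.γ * (∑ s, |d' s - d s| + ε) :=
    calc ∑ s', |d' s' - d s'|
        ≤ ∑ s', M.γ * (|∑ s, (d' s - d s) * M.transition π' s s'|
          + |∑ s, d s * (M.transition π' s s' - M.transition π s s')|) := by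
          refine Finset.sum_le_sum fun s' _ => ?_
          rw [hdiff s', abs_mul, abs_of_pos hγ]
          gcongr
          exact abs_add_le _ _
      _ = M.γ * (∑ s', |∑ s, (d' s - d s) * M.transition π' s s'|
          + ∑ s', |∑ s, d s * (M.transition π' s s' - M.transition π s s')|) := by
          rw [← Finset.mul_sum, Finset.sum_add_distrib]
      _ ≤ M.γ * (∑ s, |d' s - d s| + ε) := by
          refine mul_le_mul_of_nonneg_left (add_le_add ?_ hdrift) hγ.le
          simpa [M.sum_abs_transition hπ'] using sum_abs_sum_mul_le_s14 _ (M.transition π')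
  linarith

end IsD

section Mixture

variable {S A : Type} [Fintype A] {π₁ π₂ : S → A → ℝ} {ζ : ℝ}

theorem IsPolicy.mix_s14 (h₁ : IsPolicy π₁) (h₂ : IsPolicy π₂) (hζ0 : 0 ≤ ζ) (hζ1 : ζ ≤ 1) :
    IsPolicy fun s a => ζ * π₁ s a + (1 - ζ) * π₂ s a := by
  refine ⟨fun s a => ?_, fun s => ?_⟩
  · have := h₁.1 s a
    have := h₂.1 s a
    have : 0 ≤ 1 - ζ := sub_nonneg.2 hζ1
    positivity
  · simp [Finset.sum_add_distrib, ← Finset.mul_sum, h₁.2 s, h₂.2 s]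

theorem sum_abs_mix_sub (hζ : 0 ≤ ζ) (s : S) :
    ∑ a, |(ζ * π₁ s a + (1 - ζ) * π₂ s a) - π₂ s a| = ζ * ∑ a, |π₁ s a - π₂ s a| := by
  simp [show ∀ x y : ℝ, ζ * x + (1 - ζ) * y - y = ζ * (x - y) from
    fun x y => by ring, abs_mul, abs_of_nonneg hζ, Finset.mul_sum]

end Mixture

theorem occupancy_drift_kl_interpolation_general
    {S A : Type} [Fintype S] [Fintype A] [DecidableEq S]
    (M : FiniteMDP S A) (πK1 πK : S → A → ℝ) (C ζ : ℝ) (πt : S → A → ℝ) (dt d : S → ℝ)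
    (hπK1 : IsPolicy πK1) (hπK : IsPolicy πK) (hπKpos : ∀ s a, 0 < πK s a)
    (hKL : (⨆ s : S, KLdiv (πK1 s) (πK s)) ≤ 2 * C)
    (hζ0 : 0 ≤ ζ) (hζ1 : ζ ≤ 1)
    (hmix : ∀ s a, πt s a = ζ * πK1 s a + (1 - ζ) * πK s a)
    (hdt : IsD M πt dt) (hd : IsD M πK d) :
    ∑ s, |dt s - d s| ≤ (2 * ζ * M.γ / (1 - M.γ) ^ 2) * Real.sqrt C := by
  obtain rfl : πt = fun s a => ζ * πK1 s a + (1 - ζ) * πK s a := funext₂ hmix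
  have hTV : ∀ s, ∑ a, |πK1 s a - πK s a| ≤ 2 * √C := fun s =>
    calc ∑ a, |πK1 s a - πK s a| ≤ √(2 * KLdiv (πK1 s) (πK s)) :=
          Real.le_sqrt_of_sq_le <|
            sq_sum_abs_sub_le_two_mul_KLdiv (hπK1.1 s) (hπK1.2 s) (hπKpos s) (hπK.2 s)
      _ ≤ √(2 ^ 2 * C) := Real.sqrt_le_sqrt <| by
          linarith [le_ciSup (Set.finite_range fun s => KLdiv (πK1 s) (πK s)).bddAbove s]
      _ = 2 * √C := by rw [Real.sqrt_mul (by norm_num), Real.sqrt_sq (by norm_num)]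
  have hdrift := hdt.one_sub_mul_sum_abs_sub_le (hπK1.mix_s14 hπK hζ0 hζ1) hπK hd fun s =>
    (sum_abs_mix_sub hζ0 s).trans_le (mul_le_mul_of_nonneg_left (hTV s) hζ0)
  have h1γ : 0 < 1 - M.γ := sub_pos.2 M.γ_lt_one
  rw [div_mul_eq_mul_div, le_div_iff₀ (by positivity)]
  calc (∑ s, |dt s - d s|) * (1 - M.γ) ^ 2
      = (1 - M.γ) * ((1 - M.γ) * ∑ s, |dt s - d s|) := by ring
    _ ≤ 1 * (M.γ * (ζ * (2 * √C))) :=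
        mul_le_mul (by linarith [M.γ_pos]) hdrift
          (mul_nonneg h1γ.le (Finset.sum_nonneg fun _ _ => abs_nonneg _)) zero_le_one
    _ = 2 * ζ * M.γ * √C := by ring

/-- **Bounded drift of the discounted state distribution under KL-constrained
interpolation**: `∑_s |d^{π̃}(s) − d^{π_K}(s)| ≤ (2ζγ/(1−γ)²)·√C`. -/
theorem occupancy_drift_kl_interpolation
    {S A : Type} [Fintype S] [Fintype A] [DecidableEq S] [Nonempty S] [Nonempty A]
    (M : FiniteMDP S A) (πK1 πK : S → A → ℝ) (C ζ : ℝ) (πt : S → A → ℝ) (dt d : S → ℝ)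
    (hπK1 : IsPolicy πK1) (hπK : IsPolicy πK) (hπKpos : ∀ s a, 0 < πK s a)
    (hC : 0 ≤ C)
    (hKL : (⨆ s : S, KLdiv (πK1 s) (πK s)) ≤ 2 * C)
    (hζ0 : 0 ≤ ζ) (hζ1 : ζ ≤ 1)
    (hmix : ∀ s a, πt s a = ζ * πK1 s a + (1 - ζ) * πK s a)
    (hdt : IsD M πt dt) (hd : IsD M πK d) :
    ∑ s, |dt s - d s| ≤ (2 * ζ * M.γ / (1 - M.γ) ^ 2) * Real.sqrt C :=
  occupancy_drift_kl_interpolation_general M πK1 πK C ζ πt dt d hπK1 hπK hπKpos hKL hζ0 hζ1 hmix hdt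
    hd
end
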